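/- arXiv:2102.09924 — 2 statements merged into one kernel-verified Lean document; each statement's English description precedes it below -/
import Mathlib

section
/- In the one-hidden-layer ReLU ANN setting with constant target α, the generalized gradient vanishes at a parameter vector φ if and only if the risk vanishes: ‖G(φ)‖ = 0 ⟺ L_∞(φ) = 0. -/
open MeasureTheory

noncomputable section

/-- weight parameters -/
def wp (H : ℕ) (φ : EuclideanSpace ℝ (Fin (3*H+1))) (j : Fin H) : ℝ := φ ⟨j.1, by omega⟩
/-- bias parameters -/
def bp (H : ℕ) (φ : EuclideanSpace ℝ (Fin (3*H+1))) (j : Fin H) : ℝ := φ ⟨H + j.1, by omega⟩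
/-- outer weight parameters -/
def vp (H : ℕ) (φ : EuclideanSpace ℝ (Fin (3*H+1))) (j : Fin H) : ℝ := φ ⟨2*H + j.1, by omega⟩
/-- output bias -/
def cp (H : ℕ) (φ : EuclideanSpace ℝ (Fin (3*H+1))) : ℝ := φ ⟨3*H, by omega⟩

/-- realization of the one-hidden-layer ReLU network -/
def realization (H : ℕ) (φ : EuclideanSpace ℝ (Fin (3*H+1))) (x : ℝ) : ℝ :=
  cp H φ + ∑ j : Fin H, vp H φ j * max (wp H φ j * x + bp H φ j) 0

/-- risk with constant target α -/
def risk (H : ℕ) (α : ℝ) (φ : EuclideanSpace ℝ (Fin (3*H+1))) : ℝ :=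
  ∫ y in (0:ℝ)..1, (realization H φ y - α)^2

/-- activity interval I_j^φ -/
def actSet (H : ℕ) (φ : EuclideanSpace ℝ (Fin (3*H+1))) (j : Fin H) : Set ℝ :=
  {x | x ∈ Set.Icc (0:ℝ) 1 ∧ 0 < wp H φ j * x + bp H φ j}

/-- generalized gradient G -/
def grad (H : ℕ) (α : ℝ) (φ : EuclideanSpace ℝ (Fin (3*H+1))) :
    EuclideanSpace ℝ (Fin (3*H+1)) := WithLp.toLp 2 fun (i : Fin (3*H+1)) =>
  if h : i.1 < H then
    2 * vp H φ ⟨i.1, h⟩ * ∫ x in actSet H φ ⟨i.1, h⟩, x * (realization H φ x - α)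
  else if h2 : i.1 < 2*H then
    2 * vp H φ ⟨i.1 - H, by omega⟩ * ∫ x in actSet H φ ⟨i.1 - H, by omega⟩, (realization H φ x - α)
  else if h3 : i.1 < 3*H then
    2 * ∫ x in (0:ℝ)..1,
      max (wp H φ ⟨i.1 - 2*H, by omega⟩ * x + bp H φ ⟨i.1 - 2*H, by omega⟩) 0 * (realization H φ x - α)
  else 2 * ∫ x in (0:ℝ)..1, (realization H φ x - α)

/-- Lyapunov function V -/
def lyap (H : ℕ) (α : ℝ) (φ : EuclideanSpace ℝ (Fin (3*H+1))) : ℝ :=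
  ‖φ‖^2 + (cp H φ - 2*α)^2

/-!
The risk is a linear combination of the gradient components along the outer weights and the
output bias: since `N^φ - α = (c - α) + ∑ⱼ vⱼ max{wⱼ x + bⱼ, 0}`, integrating `(N^φ - α)²` gives
`2 L(φ) = ∑ⱼ vⱼ G_{2H+j}(φ) + (c - α) G_{3H+1}(φ)`. Conversely, zero risk means `N^φ = α`
almost everywhere on `[0, 1]`, and every component of `G(φ)` is an integral over a subset of
`[0, 1]` of a multiple of `N^φ - α`.
-/

section

variable (H : ℕ) (α : ℝ) (φ : EuclideanSpace ℝ (Fin (3*H+1)))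

@[fun_prop]
lemma continuous_realization : Continuous (realization H φ) := by
  unfold realization
  fun_prop

lemma grad_apply_outer (j : Fin H) :
    grad H α φ ⟨2*H + j, by omega⟩ =
      2 * ∫ x in (0:ℝ)..1, max (wp H φ j * x + bp H φ j) 0 * (realization H φ x - α) := by
  have hj : (⟨2*H + j - 2*H, by omega⟩ : Fin H) = j := by ext; simp
  simp only [grad, PiLp.toLp_apply, dif_neg (show ¬ 2*H + j.1 < H by omega),
    dif_neg (show ¬ 2*H + j.1 < 2*H by omega), dif_pos (show 2*H + j.1 < 3*H by omega), hj]

lemma grad_apply_last :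
    grad H α φ ⟨3*H, by omega⟩ = 2 * ∫ x in (0:ℝ)..1, (realization H φ x - α) := by
  simp only [grad, PiLp.toLp_apply, dif_neg (show ¬ 3*H < H by omega),
    dif_neg (show ¬ 3*H < 2*H by omega), dif_neg (lt_irrefl (3*H))]

lemma two_mul_risk_eq_sum_grad :
    2 * risk H α φ = ∑ j : Fin H, vp H φ j * grad H α φ ⟨2*H + j, by omega⟩
      + (cp H φ - α) * grad H α φ ⟨3*H, by omega⟩ := by
  have hsq : ∀ x, (realization H φ x - α) ^ 2 = (cp H φ - α) * (realization H φ x - α)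
      + ∑ j, vp H φ j * (max (wp H φ j * x + bp H φ j) 0 * (realization H φ x - α)) := by
    intro x
    simp_rw [← mul_assoc, ← Finset.sum_mul]
    unfold realization
    ring
  simp_rw [grad_apply_outer, grad_apply_last, risk, hsq]
  rw [intervalIntegral.integral_add (Continuous.intervalIntegrable (by fun_prop) _ _)
      (Continuous.intervalIntegrable (by fun_prop) _ _),
    intervalIntegral.integral_const_mul,
    intervalIntegral.integral_finsetSum fun j _ => Continuous.intervalIntegrable (by fun_prop) _ _]
  simp only [intervalIntegral.integral_const_mul, mul_add, Finset.mul_sum]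
  rw [add_comm]
  congr 1
  · exact Finset.sum_congr rfl fun _ _ => by ring
  · ring

lemma ae_realization_eq_of_risk_eq_zero (hR : risk H α φ = 0) :
    ∀ᵐ x ∂volume.restrict (Set.Icc (0:ℝ) 1), realization H φ x = α := by
  have hint : IntegrableOn (fun x => (realization H φ x - α) ^ 2) (Set.Ioc 0 1) :=
    (Continuous.integrableOn_Icc (by fun_prop)).mono_set Set.Ioc_subset_Icc_self
  rw [risk, intervalIntegral.integral_of_le zero_le_one,
    integral_eq_zero_iff_of_nonneg (fun _ => sq_nonneg _) hint,
    Measure.restrict_congr_set Ioc_ae_eq_Icc] at hR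
  filter_upwards [hR] with x hx
  simpa [sub_eq_zero] using hx

lemma setIntegral_mul_sub_eq_zero_of_risk_eq_zero (hR : risk H α φ = 0) {s : Set ℝ}
    (hs : s ⊆ Set.Icc 0 1) (g : ℝ → ℝ) : ∫ x in s, g x * (realization H φ x - α) = 0 := by
  refine integral_eq_zero_of_ae ?_
  filter_upwards [ae_restrict_of_ae_restrict_of_subset hs
    (ae_realization_eq_of_risk_eq_zero H α φ hR)] with x hx
  simp [hx]

lemma grad_eq_zero_of_risk_eq_zero (hR : risk H α φ = 0) : grad H α φ = 0 := by
  have hact : ∀ j (g : ℝ → ℝ), ∫ x in actSet H φ j, g x * (realization H φ x - α) = 0 := fun j =>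
    setIntegral_mul_sub_eq_zero_of_risk_eq_zero H α φ hR fun _ hx => hx.1
  have hinterval : ∀ g : ℝ → ℝ, ∫ x in (0:ℝ)..1, g x * (realization H φ x - α) = 0 := fun g => by
    rw [intervalIntegral.integral_of_le zero_le_one]
    exact setIntegral_mul_sub_eq_zero_of_risk_eq_zero H α φ hR Set.Ioc_subset_Icc_self g
  have hact_one : ∀ j, ∫ x in actSet H φ j, (realization H φ x - α) = 0 := fun j => by
    simpa using hact j 1
  have hinterval_one : ∫ x in (0:ℝ)..1, (realization H φ x - α) = 0 := by
    simpa using hinterval 1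
  ext i
  simp only [grad, PiLp.toLp_apply]
  split_ifs <;> simp [hact, hinterval, hact_one, hinterval_one]

end

theorem grad_eq_zero_iff_risk_eq_zero_general (H : ℕ) (α : ℝ)
    (φ : EuclideanSpace ℝ (Fin (3*H+1))) :
    ‖grad H α φ‖ = 0 ↔ risk H α φ = 0 := by
  rw [norm_eq_zero]
  refine ⟨fun hG => ?_, grad_eq_zero_of_risk_eq_zero H α φ⟩
  have h := two_mul_risk_eq_sum_grad H α φ
  simp only [hG, PiLp.zero_apply, mul_zero, Finset.sum_const_zero, add_zero] at h
  linarith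

theorem grad_eq_zero_iff_risk_eq_zero (H : ℕ) (hH : 0 < H) (α : ℝ)
    (φ : EuclideanSpace ℝ (Fin (3*H+1))) :
    ‖grad H α φ‖ = 0 ↔ risk H α φ = 0 :=
  grad_eq_zero_iff_risk_eq_zero_general H α φ
end
end

section
/- In the one-hidden-layer ReLU ANN setting with constant target α, every continuous gradient flow trajectory Θ : [0,∞) → ℝ^{3H+1} satisfying Θ_t = Θ_0 − ∫_0^t G(Θ_s) ds is uniformly bounded with sup_{t ∈ [0,∞)} ‖Θ_t‖ ≤ (V(Θ_0))^{1/2} < ∞. -/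
open MeasureTheory

noncomputable section

/-!
Along the flow `V(Θ_t)` cannot increase: the derivative of `V` at `φ` in the direction `-G(φ)` is
`-2 (⟪φ, G φ⟫ + (c(φ) - 2α) G_c(φ)) = -8 L_∞(φ) ≤ 0`, because within each neuron the `w`- and
`b`-components of `G` recombine on the activity interval into its `v`-component. Since `Θ` is only
known to solve the integral equation, this is used without differentiating: on `[s, r]` the
increment of `V(Θ)` is at most `6 (∫_s^r ‖G(Θ)‖)²`, and a continuous induction shows that a function
whose increments are quadratically small with respect to those of a continuous nondecreasing
function cannot increase. Hence `‖Θ_t‖² ≤ V(Θ_t) ≤ V(Θ_0)`.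
-/

open Set Filter Topology
open scoped InnerProductSpace

theorem sub_le_mul_sub_of_sub_le_mul_sq {g u : ℝ → ℝ} {a b C ε : ℝ} (hab : a ≤ b) (hε : 0 < ε)
    (hg : ContinuousOn g (Icc a b)) (hu : ContinuousOn u (Icc a b))
    (hmono : MonotoneOn u (Icc a b))
    (h : ∀ s ∈ Icc a b, ∀ t ∈ Icc a b, s ≤ t → g t - g s ≤ C * (u t - u s) ^ 2) :
    g b - g a ≤ ε * (u b - u a) := by
  let S := {r | g r - g a - ε * (u r - u a) ≤ 0}
  have hS : IsClosed (S ∩ Icc a b) := by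
    rw [inter_comm]
    exact ContinuousOn.preimage_isClosed_of_isClosed
      ((hg.sub continuousOn_const).sub (continuousOn_const.mul (hu.sub continuousOn_const)))
      isClosed_Icc isClosed_Iic
  suffices b ∈ S by simp only [S, mem_ofPred_eq] at this; linarith
  refine hS.mem_of_ge_of_forall_exists_gt (by simp [S]) hab fun x ⟨hxS, hx⟩ => ?_
  have hxb : ∀ᶠ r in 𝓝[>] x, r ∈ Icc x b := Icc_mem_nhdsGT hx.2
  have hux : ContinuousWithinAt u (Ioi x) x :=
    (hu x (Ico_subset_Icc_self hx)).mono_of_mem_nhdsWithin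
      (mem_of_superset hxb (Icc_subset_Icc_left hx.1))
  -- near `x` the increment of `u` is below `ε / (|C| + 1)`, so `C (Δu)² ≤ ε Δu`
  have hsmall : ∀ᶠ r in 𝓝[>] x, u r < u x + ε / (|C| + 1) :=
    hux.eventually (gt_mem_nhds (lt_add_of_pos_right _ (by positivity)))
  obtain ⟨r, hr, hrsmall, hrx⟩ := (hxb.and (hsmall.and self_mem_nhdsWithin)).exists
  have hr' : r ∈ Icc a b := ⟨hx.1.trans hr.1, hr.2⟩
  refine ⟨r, ?_, hrx, hr.2⟩
  have hΔ : 0 ≤ u r - u x := sub_nonneg.2 (hmono (Ico_subset_Icc_self hx) hr' hr.1)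
  have hquad : C * (u r - u x) ^ 2 ≤ ε * (u r - u x) := by
    have h1 : (|C| + 1) * (u r - u x) ≤ ε := by
      rw [← le_div_iff₀' (by positivity)]; linarith
    nlinarith [le_abs_self C, abs_nonneg C]
  have := h x (Ico_subset_Icc_self hx) r hr' hr.1
  simp only [S, mem_ofPred_eq] at hxS ⊢
  linarith

theorem le_of_sub_le_mul_sq {g u : ℝ → ℝ} {a b C : ℝ} (hab : a ≤ b)
    (hg : ContinuousOn g (Icc a b)) (hu : ContinuousOn u (Icc a b))
    (hmono : MonotoneOn u (Icc a b))
    (h : ∀ s ∈ Icc a b, ∀ t ∈ Icc a b, s ≤ t → g t - g s ≤ C * (u t - u s) ^ 2) :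
    g b ≤ g a := by
  have hΔ : 0 ≤ u b - u a := sub_nonneg.2 (hmono (left_mem_Icc.2 hab) (right_mem_Icc.2 hab) hab)
  refine le_of_forall_pos_le_add fun δ hδ => ?_
  have := sub_le_mul_sub_of_sub_le_mul_sq hab (by positivity : 0 < δ / (u b - u a + 1))
    hg hu hmono h
  have : δ / (u b - u a + 1) * (u b - u a) ≤ δ := by
    rw [div_mul_eq_mul_div, div_le_iff₀ (by positivity)]; nlinarith
  linarith

section IntegralFlow

variable {E : Type*} [NormedAddCommGroup E] [InnerProductSpace ℝ E] (ℓ : StrongDual ℝ E) (β : ℝ)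

def lyapunov (x : E) : ℝ := ‖x‖ ^ 2 + (ℓ x - β) ^ 2

def lyapunovDeriv (x : E) : StrongDual ℝ E := (2 : ℝ) • (innerSL ℝ x + (ℓ x - β) • ℓ)

variable {ℓ β}

@[simp]
lemma lyapunovDeriv_apply (x y : E) :
    lyapunovDeriv ℓ β x y = 2 * (⟪x, y⟫_ℝ + (ℓ x - β) * ℓ y) := by
  simp [lyapunovDeriv, mul_add]

lemma continuous_lyapunov : Continuous (lyapunov ℓ β) := by
  unfold lyapunov; fun_prop

lemma lyapunov_sub (x d : E) :
    lyapunov ℓ β (x - d) = lyapunov ℓ β x - lyapunovDeriv ℓ β x d + (‖d‖ ^ 2 + ℓ d ^ 2) := by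
  simp only [lyapunov, lyapunovDeriv_apply, norm_sub_sq_real, map_sub]
  ring

lemma lyapunovDeriv_sub_le (hℓ : ‖ℓ‖ ≤ 1) (x x' y : E) :
    lyapunovDeriv ℓ β x y - lyapunovDeriv ℓ β x' y ≤ 4 * ‖x - x'‖ * ‖y‖ := by
  have hℓ' : ∀ z, |ℓ z| ≤ ‖z‖ := fun z => by
    simpa using ℓ.le_of_opNorm_le hℓ z
  have h1 : ⟪x - x', y⟫_ℝ ≤ ‖x - x'‖ * ‖y‖ := real_inner_le_norm _ _
  have h2 : ℓ (x - x') * ℓ y ≤ ‖x - x'‖ * ‖y‖ := (le_abs_self _).trans <| by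
    rw [abs_mul]; exact mul_le_mul (hℓ' _) (hℓ' _) (abs_nonneg _) (norm_nonneg _)
  simp only [lyapunovDeriv_apply, inner_sub_left, map_sub] at h1 h2 ⊢
  nlinarith

lemma lyapunov_sub_le_of_integral [CompleteSpace E] (hℓ : ‖ℓ‖ ≤ 1) {Θ f : ℝ → E} {s r : ℝ}
    (hsr : s ≤ r) (hf : IntervalIntegrable f volume s r)
    (hΘ : ∀ u ∈ Icc s r, Θ u = Θ s - ∫ v in s..u, f v)
    (hdescent : ∀ u ∈ Icc s r, 0 ≤ lyapunovDeriv ℓ β (Θ u) (f u)) :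
    lyapunov ℓ β (Θ r) - lyapunov ℓ β (Θ s) ≤ 6 * (∫ v in s..r, ‖f v‖) ^ 2 := by
  set M := ∫ v in s..r, ‖f v‖
  set D := ∫ v in s..r, f v
  have hdist : ∀ u ∈ Icc s r, ‖Θ u - Θ s‖ ≤ M := fun u hu => by
    rw [hΘ u hu, sub_sub_cancel_left, norm_neg]
    calc _ ≤ ∫ v in s..u, ‖f v‖ := intervalIntegral.norm_integral_le_integral_norm hu.1
      _ ≤ M := intervalIntegral.integral_mono_interval le_rfl hu.1 hu.2
          (ae_of_all _ fun _ => norm_nonneg _) hf.norm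
  -- `-lyapunovDeriv ℓ β (Θ u) (f u) ≤ 0`, and moving the base point from `Θ u` to `Θ s`
  -- costs at most `4 M ‖f u‖`
  have hfirst : -lyapunovDeriv ℓ β (Θ s) D ≤ 4 * M * M := by
    rw [← (lyapunovDeriv ℓ β (Θ s)).intervalIntegral_comp_comm hf, ← intervalIntegral.integral_neg,
      ← intervalIntegral.integral_const_mul]
    refine intervalIntegral.integral_mono_on hsr
      (IntervalIntegrable.neg ⟨(lyapunovDeriv ℓ β (Θ s)).integrable_comp hf.1,
        (lyapunovDeriv ℓ β (Θ s)).integrable_comp hf.2⟩) (hf.norm.const_mul _)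
      fun u hu => ?_
    have := lyapunovDeriv_sub_le (β := β) hℓ (Θ u) (Θ s) (f u)
    have := mul_le_mul_of_nonneg_right (hdist u hu) (norm_nonneg (f u))
    linarith [hdescent u hu]
  have hD : ‖D‖ ≤ M := intervalIntegral.norm_integral_le_integral_norm hsr
  have hℓD : |ℓ D| ≤ M := by simpa using (ℓ.le_of_opNorm_le hℓ D).trans (by linarith)
  have hsecond : ‖D‖ ^ 2 + ℓ D ^ 2 ≤ 2 * M ^ 2 := by
    nlinarith [abs_le.1 hℓD, norm_nonneg D]
  rw [hΘ r ⟨hsr, le_rfl⟩, lyapunov_sub]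
  nlinarith

theorem lyapunov_le_of_integral_flow [CompleteSpace E] (hℓ : ‖ℓ‖ ≤ 1) {G : E → E}
    (hG : ∀ x, 0 ≤ lyapunovDeriv ℓ β x (G x)) {Θ : ℝ → E}
    (hflow : ∀ t ∈ Ici (0 : ℝ), Θ t = Θ 0 - ∫ s in (0 : ℝ)..t, G (Θ s)) {t : ℝ} (ht : 0 ≤ t) :
    lyapunov ℓ β (Θ t) ≤ lyapunov ℓ β (Θ 0) := by
  set f := fun s => G (Θ s)
  by_cases hint : IntervalIntegrable f volume 0 t
  swap
  · rw [hflow t ht, intervalIntegral.integral_undef hint, sub_zero]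
  have hsub : ∀ u ∈ Icc 0 t, ∀ v ∈ Icc 0 t, IntervalIntegrable f volume u v :=
    fun u hu v hv => hint.mono_set <| uIcc_subset_uIcc (by rwa [uIcc_of_le ht])
      (by rwa [uIcc_of_le ht])
  have h0 : (0 : ℝ) ∈ Icc 0 t := left_mem_Icc.2 ht
  have hΘ : ∀ s ∈ Icc 0 t, ∀ u ∈ Icc 0 t, Θ u = Θ s - ∫ v in s..u, f v := fun s hs u hu => by
    rw [hflow u hu.1, hflow s hs.1, ← intervalIntegral.integral_interval_sub_left
      (hsub 0 h0 u hu) (hsub 0 h0 s hs)]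
    abel
  have h0' : (0 : ℝ) ∈ uIcc 0 t := left_mem_uIcc
  have hΘcont : ContinuousOn Θ (Icc 0 t) := by
    have := intervalIntegral.continuousOn_primitive_interval' hint h0'
    rw [uIcc_of_le ht] at this
    exact (continuousOn_const.sub this).congr fun u hu => hflow u hu.1
  have hU : ContinuousOn (fun r => ∫ v in (0 : ℝ)..r, ‖f v‖) (Icc 0 t) := by
    simpa [uIcc_of_le ht] using intervalIntegral.continuousOn_primitive_interval' hint.norm h0'
  have hUmono : MonotoneOn (fun r => ∫ v in (0 : ℝ)..r, ‖f v‖) (Icc 0 t) :=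
    fun u hu v hv huv => intervalIntegral.integral_mono_interval le_rfl hu.1 huv
      (ae_of_all _ fun _ => norm_nonneg _) (hsub 0 h0 v hv).norm
  refine le_of_sub_le_mul_sq (C := 6) ht (continuous_lyapunov.comp_continuousOn hΘcont) hU hUmono
    fun s hs r hr hsr => ?_
  rw [intervalIntegral.integral_interval_sub_left (hsub 0 h0 r hr).norm (hsub 0 h0 s hs).norm]
  exact lyapunov_sub_le_of_integral hℓ hsr (hsub s hs r hr)
    (fun u hu => hΘ s hs u ⟨hs.1.trans hu.1, hu.2.trans hr.2⟩) fun u _ => hG (Θ u)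

end IntegralFlow

theorem sum_fin_three_mul_add_one {M : Type*} [AddCommMonoid M] (H : ℕ) (F : Fin (3 * H + 1) → M) :
    ∑ i, F i = ∑ j : Fin H, (F ⟨j, by omega⟩ + F ⟨H + j, by omega⟩ + F ⟨2 * H + j, by omega⟩)
      + F ⟨3 * H, by omega⟩ := by
  rw [Fin.sum_univ_castSucc, ← (finCongr (by ring : H + H + H = 3 * H)).sum_comp,
    Fin.sum_univ_add, Fin.sum_univ_add, Finset.sum_add_distrib, Finset.sum_add_distrib]
  congr 2
  exact Finset.sum_congr rfl fun j _ => congrArg F (Fin.ext (by simp; omega))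

lemma inner_eq_sum_blocks {H : ℕ} (φ ψ : EuclideanSpace ℝ (Fin (3 * H + 1))) :
    ⟪φ, ψ⟫_ℝ = ∑ j, (wp H φ j * wp H ψ j + bp H φ j * bp H ψ j + vp H φ j * vp H ψ j)
      + cp H φ * cp H ψ := by
  rw [PiLp.inner_apply, sum_fin_three_mul_add_one]
  simp [wp, bp, vp, cp, mul_comm]

lemma setIntegral_pos_mul_eq_integral_max_mul {h e : ℝ → ℝ} (hh : Measurable h) :
    ∫ x in Icc 0 1 ∩ {x | 0 < h x}, h x * e x = ∫ x in (0 : ℝ)..1, max (h x) 0 * e x := by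
  rw [intervalIntegral.integral_of_le zero_le_one, ← integral_Icc_eq_integral_Ioc,
    ← setIntegral_indicator (measurableSet_lt measurable_const hh)]
  refine setIntegral_congr_fun measurableSet_Icc fun x _ => ?_
  by_cases hx : 0 < h x
  · simp [Set.indicator_of_mem (show x ∈ {x | 0 < h x} from hx), max_eq_left hx.le]
  · simp [Set.indicator_of_notMem (show x ∉ {x | 0 < h x} from hx), max_eq_right (not_lt.1 hx)]

lemma norm_euclideanSpace_proj_le_one {ι : Type*} [Fintype ι] (i : ι) :
    ‖EuclideanSpace.proj (𝕜 := ℝ) i‖ ≤ 1 :=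
  ContinuousLinearMap.opNorm_le_bound _ zero_le_one fun x => by
    simpa using PiLp.norm_apply_le x i

section Network

variable {H : ℕ} {α : ℝ}

lemma continuous_realization_sub (φ : EuclideanSpace ℝ (Fin (3 * H + 1))) :
    Continuous fun x => realization H φ x - α := by
  unfold realization; fun_prop

lemma wp_grad (φ : EuclideanSpace ℝ (Fin (3 * H + 1))) (j : Fin H) :
    wp H (grad H α φ) j = 2 * vp H φ j * ∫ x in actSet H φ j, x * (realization H φ x - α) := by
  simp [wp, grad]

lemma bp_grad (φ : EuclideanSpace ℝ (Fin (3 * H + 1))) (j : Fin H) :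
    bp H (grad H α φ) j = 2 * vp H φ j * ∫ x in actSet H φ j, (realization H φ x - α) := by
  simp [bp, grad, show ¬H + j.1 < H by omega, show H + j.1 < 2 * H by omega]

lemma vp_grad (φ : EuclideanSpace ℝ (Fin (3 * H + 1))) (j : Fin H) :
    vp H (grad H α φ) j
      = 2 * ∫ x in (0 : ℝ)..1, max (wp H φ j * x + bp H φ j) 0 * (realization H φ x - α) := by
  simp [vp, grad, show ¬2 * H + j.1 < H by omega, show ¬2 * H + j.1 < 2 * H by omega,
    show 2 * H + j.1 < 3 * H by omega]

lemma cp_grad (φ : EuclideanSpace ℝ (Fin (3 * H + 1))) :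
    cp H (grad H α φ) = 2 * ∫ x in (0 : ℝ)..1, (realization H φ x - α) := by
  simp [cp, grad, show ¬3 * H < H by omega, show ¬3 * H < 2 * H by omega]

lemma integrableOn_actSet (φ : EuclideanSpace ℝ (Fin (3 * H + 1))) (j : Fin H) {g : ℝ → ℝ}
    (hg : Continuous g) : IntegrableOn g (actSet H φ j) :=
  (hg.continuousOn.integrableOn_compact isCompact_Icc).mono_set fun _ hx => hx.1

lemma measurableSet_actSet (φ : EuclideanSpace ℝ (Fin (3 * H + 1))) (j : Fin H) :
    MeasurableSet (actSet H φ j) :=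
  measurableSet_Icc.inter (measurableSet_lt measurable_const
    ((measurable_id.const_mul _).add_const _))

lemma block_inner_grad (φ : EuclideanSpace ℝ (Fin (3 * H + 1))) (j : Fin H) :
    wp H φ j * wp H (grad H α φ) j + bp H φ j * bp H (grad H α φ) j
        + vp H φ j * vp H (grad H α φ) j
      = 4 * (vp H φ j * ∫ x in (0 : ℝ)..1,
          max (wp H φ j * x + bp H φ j) 0 * (realization H φ x - α)) := by
  have he := continuous_realization_sub (α := α) φ
  have hact : wp H φ j * (∫ x in actSet H φ j, x * (realization H φ x - α))
      + bp H φ j * ∫ x in actSet H φ j, (realization H φ x - α)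
      = ∫ x in (0 : ℝ)..1, max (wp H φ j * x + bp H φ j) 0 * (realization H φ x - α) := by
    rw [← integral_const_mul, ← integral_const_mul, ← integral_add
      ((integrableOn_actSet φ j (g := fun x => x * (realization H φ x - α))
        (continuous_id.mul he)).const_mul _)
      ((integrableOn_actSet φ j he).const_mul _),
      ← setIntegral_pos_mul_eq_integral_max_mul (by fun_prop)]
    exact setIntegral_congr_fun (measurableSet_actSet φ j) fun x _ => by ring
  rw [wp_grad, bp_grad, vp_grad]
  linear_combination (2 * vp H φ j) * hact

lemma sum_vp_mul_integral (φ : EuclideanSpace ℝ (Fin (3 * H + 1))) :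
    ∑ j, vp H φ j * ∫ x in (0 : ℝ)..1,
        max (wp H φ j * x + bp H φ j) 0 * (realization H φ x - α)
      = ∫ x in (0 : ℝ)..1, (realization H φ x - cp H φ) * (realization H φ x - α) := by
  have he := continuous_realization_sub (α := α) φ
  simp_rw [← intervalIntegral.integral_const_mul]
  rw [← intervalIntegral.integral_finsetSum fun j _ =>
    (Continuous.intervalIntegrable (by fun_prop) _ _)]
  refine intervalIntegral.integral_congr fun x _ => ?_
  simp only [realization, add_sub_cancel_left, Finset.sum_mul, mul_assoc]

lemma inner_grad_add_mul_cp_grad (φ : EuclideanSpace ℝ (Fin (3 * H + 1))) :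
    ⟪φ, grad H α φ⟫_ℝ + (cp H φ - 2 * α) * cp H (grad H α φ) = 4 * risk H α φ := by
  have he := continuous_realization_sub (α := α) φ
  have hsplit : ∫ x in (0 : ℝ)..1, (realization H φ x - cp H φ) * (realization H φ x - α)
      = risk H α φ + (α - cp H φ) * ∫ x in (0 : ℝ)..1, (realization H φ x - α) := by
    rw [risk, ← intervalIntegral.integral_const_mul,
      ← intervalIntegral.integral_add (f := fun x => (realization H φ x - α) ^ 2)
        ((he.pow 2).intervalIntegrable _ _) ((he.intervalIntegrable _ _).const_mul _)]
    exact intervalIntegral.integral_congr fun x _ => by ring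
  rw [inner_eq_sum_blocks, Finset.sum_congr rfl fun j _ => block_inner_grad φ j,
    ← Finset.mul_sum, sum_vp_mul_integral, hsplit, cp_grad]
  ring

lemma proj_eq_cp (φ : EuclideanSpace ℝ (Fin (3 * H + 1))) :
    EuclideanSpace.proj (⟨3 * H, by omega⟩ : Fin (3 * H + 1)) φ = cp H φ :=
  rfl

lemma risk_nonneg (φ : EuclideanSpace ℝ (Fin (3 * H + 1))) : 0 ≤ risk H α φ :=
  intervalIntegral.integral_nonneg zero_le_one fun _ _ => sq_nonneg _

lemma lyapunovDeriv_grad_nonneg (φ : EuclideanSpace ℝ (Fin (3 * H + 1))) :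
    0 ≤ lyapunovDeriv (EuclideanSpace.proj (⟨3 * H, by omega⟩ : Fin (3 * H + 1))) (2 * α) φ
      (grad H α φ) := by
  rw [lyapunovDeriv_apply, proj_eq_cp, proj_eq_cp, inner_grad_add_mul_cp_grad]
  linarith [risk_nonneg (α := α) φ]

lemma lyap_eq_lyapunov (φ : EuclideanSpace ℝ (Fin (3 * H + 1))) :
    lyap H α φ = lyapunov (EuclideanSpace.proj (⟨3 * H, by omega⟩ : Fin (3 * H + 1))) (2 * α) φ :=
  rfl

end Network

theorem flow_uniformly_bounded_general (H : ℕ) (α : ℝ)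
    (Θ : ℝ → EuclideanSpace ℝ (Fin (3*H+1)))
    (hflow : ∀ t ∈ Set.Ici (0:ℝ), Θ t = Θ 0 - ∫ s in (0:ℝ)..t, grad H α (Θ s)) :
    ∀ t ∈ Set.Ici (0:ℝ), ‖Θ t‖ ≤ Real.sqrt (lyap H α (Θ 0)) := by
  intro t ht
  have hV := lyapunov_le_of_integral_flow
    (norm_euclideanSpace_proj_le_one (⟨3 * H, by omega⟩ : Fin (3 * H + 1)))
    (lyapunovDeriv_grad_nonneg (α := α)) hflow ht
  rw [← lyap_eq_lyapunov, ← lyap_eq_lyapunov] at hV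
  exact Real.le_sqrt_of_sq_le ((le_add_of_nonneg_right (sq_nonneg _)).trans hV)

theorem flow_uniformly_bounded (H : ℕ) (hH : 0 < H) (α : ℝ)
    (Θ : ℝ → EuclideanSpace ℝ (Fin (3*H+1)))
    (hΘcont : ContinuousOn Θ (Set.Ici 0))
    (hflow : ∀ t ∈ Set.Ici (0:ℝ), Θ t = Θ 0 - ∫ s in (0:ℝ)..t, grad H α (Θ s)) :
    ∀ t ∈ Set.Ici (0:ℝ), ‖Θ t‖ ≤ Real.sqrt (lyap H α (Θ 0)) :=
  flow_uniformly_bounded_general H α Θ hflow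
end
end
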